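/- Let g and ḡ be two inner products on a finite-dimensional real vector space V with ḡ ≥ g (i.e. ḡ(X,X) ≥ g(X,X) for all X). Then for every covariant 4-tensor T on V, the norm of T with respect to ḡ is at most the norm with respect to g: |T|_ḡ ≤ |T|_g. -/

import Mathlib

/-!
Contracting `T ⊗ T` with four copies of `H` is the quadratic form of the Kronecker power
`H ⊗ₖ H ⊗ₖ H ⊗ₖ H` evaluated at `T`, viewed as a vector indexed by `(Fin n)⁴`. Inversion is
antitone in the Loewner order, so `ḡ⁻¹ ≤ g⁻¹`, and the Kronecker product of positive semidefinite
matrices is monotone in each factor, since `B ⊗ D - A ⊗ C = (B - A) ⊗ D + A ⊗ (D - C)`.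
-/

open Matrix

/-- The squared norm of a covariant 4-tensor `T` with respect to the (inverse) metric `H`:
`|T|² = H^{i₁j₁} H^{i₂j₂} H^{i₃j₃} H^{i₄j₄} T_{i₁i₂i₃i₄} T_{j₁j₂j₃j₄}`. -/
def normSq4 {n : ℕ} (H : Matrix (Fin n) (Fin n) ℝ)
    (T : Fin n → Fin n → Fin n → Fin n → ℝ) : ℝ :=
  ∑ i₁, ∑ j₁, ∑ i₂, ∑ j₂, ∑ i₃, ∑ j₃, ∑ i₄, ∑ j₄,
    H i₁ j₁ * H i₂ j₂ * H i₃ j₃ * H i₄ j₄ * T i₁ i₂ i₃ i₄ * T j₁ j₂ j₃ j₄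

open scoped Kronecker MatrixOrder

namespace Matrix

theorem mulVec_nonsing_inv_mulVec {ι R : Type*} [Fintype ι] [DecidableEq ι] [CommRing R]
    {A : Matrix ι ι R} (hA : IsUnit A.det) (x : ι → R) : A *ᵥ (A⁻¹ *ᵥ x) = x := by
  rw [mulVec_mulVec, mul_nonsing_inv _ hA, one_mulVec]

theorem dotProduct_mulVec_le_of_le {ι : Type*} [Fintype ι] {A B : Matrix ι ι ℝ} (hAB : A ≤ B)
    (x : ι → ℝ) : x ⬝ᵥ A *ᵥ x ≤ x ⬝ᵥ B *ᵥ x := by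
  have h := (le_iff.mp hAB).dotProduct_mulVec_nonneg x
  rwa [star_trivial, sub_mulVec, dotProduct_sub, sub_nonneg] at h

theorem PosDef.two_mul_dotProduct_sub_le_dotProduct_inv_mulVec {ι : Type*} [Fintype ι]
    [DecidableEq ι] {A : Matrix ι ι ℝ} (hA : A.PosDef) (x y : ι → ℝ) :
    2 * (y ⬝ᵥ x) - y ⬝ᵥ A *ᵥ y ≤ x ⬝ᵥ A⁻¹ *ᵥ x := by
  set z := A⁻¹ *ᵥ x
  have hAz : A *ᵥ z = x := mulVec_nonsing_inv_mulVec ((isUnit_iff_isUnit_det A).mp hA.isUnit) x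
  have hzy : z ⬝ᵥ A *ᵥ y = y ⬝ᵥ x := by
    rw [dotProduct_mulVec, ← mulVec_transpose, ← conjTranspose_eq_transpose_of_trivial,
      hA.isHermitian.eq, hAz, dotProduct_comm]
  have h := hA.posSemidef.dotProduct_mulVec_nonneg (z - y)
  rw [star_trivial, mulVec_sub, sub_dotProduct, dotProduct_sub, dotProduct_sub, hAz, hzy,
    dotProduct_comm z x] at h
  linarith

theorem PosDef.inv_le_inv {ι : Type*} [Fintype ι] [DecidableEq ι] {A B : Matrix ι ι ℝ}
    (hA : A.PosDef) (hAB : A ≤ B) : B⁻¹ ≤ A⁻¹ := by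
  have hB : B.PosDef := by simpa using hA.add_posSemidef (le_iff.mp hAB)
  refine le_iff.mpr <| .of_dotProduct_mulVec_nonneg
    (hA.inv.isHermitian.sub hB.inv.isHermitian) fun x => ?_
  -- `y = B⁻¹ x` attains equality in the bound for `B`, and the bound for `A` is smaller
  set y := B⁻¹ *ᵥ x
  have hBy : B *ᵥ y = x := mulVec_nonsing_inv_mulVec ((isUnit_iff_isUnit_det B).mp hB.isUnit) x
  have hA_bound := hA.two_mul_dotProduct_sub_le_dotProduct_inv_mulVec x y
  have hAB_y := dotProduct_mulVec_le_of_le hAB y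
  rw [hBy] at hAB_y
  have hyx : y ⬝ᵥ x = x ⬝ᵥ y := dotProduct_comm _ _
  rw [star_trivial, sub_mulVec, dotProduct_sub]
  linarith

theorem kronecker_nonneg {𝕜 m n : Type*} [RCLike 𝕜] [Finite m] [Finite n]
    {A : Matrix m m 𝕜} {C : Matrix n n 𝕜} (hA : 0 ≤ A) (hC : 0 ≤ C) : 0 ≤ A ⊗ₖ C :=
  nonneg_iff_posSemidef.mpr <|
    (nonneg_iff_posSemidef.mp hA).kronecker (nonneg_iff_posSemidef.mp hC)

theorem kronecker_le_kronecker {𝕜 m n : Type*} [RCLike 𝕜] [Finite m] [Finite n]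
    {A B : Matrix m m 𝕜} {C D : Matrix n n 𝕜}
    (hA : 0 ≤ A) (hAB : A ≤ B) (hC : 0 ≤ C) (hCD : C ≤ D) : A ⊗ₖ C ≤ B ⊗ₖ D :=
  calc A ⊗ₖ C ≤ A ⊗ₖ C + A ⊗ₖ (D - C) :=
        le_add_of_nonneg_right <| kronecker_nonneg hA (sub_nonneg.mpr hCD)
    _ = A ⊗ₖ D := by rw [← kronecker_add, add_sub_cancel]
    _ ≤ A ⊗ₖ D + (B - A) ⊗ₖ D :=
        le_add_of_nonneg_right <| kronecker_nonneg (sub_nonneg.mpr hAB) (hC.trans hCD)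
    _ = B ⊗ₖ D := by rw [← add_kronecker, add_sub_cancel]

theorem dotProduct_mulVec_eq_sum {ι R : Type*} [Fintype ι] [CommSemiring R] (A : Matrix ι ι R)
    (x y : ι → R) : x ⬝ᵥ A *ᵥ y = ∑ i, ∑ j, A i j * x i * y j := by
  simp only [dotProduct, mulVec, Finset.mul_sum]
  exact Finset.sum_congr rfl fun i _ => Finset.sum_congr rfl fun j _ => by ring

theorem dotProduct_kronecker_mulVec {m n R : Type*} [Fintype m] [Fintype n] [CommSemiring R]
    (A : Matrix m m R) (B : Matrix n n R) (x y : m × n → R) :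
    x ⬝ᵥ (A ⊗ₖ B) *ᵥ y = ∑ i, ∑ j, A i j * ((fun k => x (i, k)) ⬝ᵥ B *ᵥ fun l => y (j, l)) := by
  simp only [dotProduct, mulVec, Fintype.sum_prod_type, kroneckerMap_apply, Finset.mul_sum]
  refine Finset.sum_congr rfl fun i _ => ?_
  rw [Finset.sum_comm]
  exact Finset.sum_congr rfl fun j _ => Finset.sum_congr rfl fun k _ =>
    Finset.sum_congr rfl fun l _ => by ring

end Matrix

theorem normSq4_eq_dotProduct_kronecker {n : ℕ} (H : Matrix (Fin n) (Fin n) ℝ)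
    (T : Fin n → Fin n → Fin n → Fin n → ℝ) :
    normSq4 H T = (fun i : Fin n × Fin n × Fin n × Fin n => T i.1 i.2.1 i.2.2.1 i.2.2.2) ⬝ᵥ
      (H ⊗ₖ (H ⊗ₖ (H ⊗ₖ H))) *ᵥ (fun i => T i.1 i.2.1 i.2.2.1 i.2.2.2) := by
  simp only [dotProduct_kronecker_mulVec]
  simp only [dotProduct_mulVec_eq_sum, Finset.mul_sum, normSq4]
  iterate 8 refine Finset.sum_congr rfl fun _ _ => ?_
  ring

theorem normSq4_le_of_le {n : ℕ} {A B : Matrix (Fin n) (Fin n) ℝ} (hA : 0 ≤ A) (hAB : A ≤ B)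
    (T : Fin n → Fin n → Fin n → Fin n → ℝ) : normSq4 A T ≤ normSq4 B T := by
  have h₂ := kronecker_le_kronecker hA hAB hA hAB
  have h₃ := kronecker_le_kronecker hA hAB (kronecker_nonneg hA hA) h₂
  have h₄ := kronecker_le_kronecker hA hAB (kronecker_nonneg hA (kronecker_nonneg hA hA)) h₃
  rw [normSq4_eq_dotProduct_kronecker, normSq4_eq_dotProduct_kronecker]
  exact dotProduct_mulVec_le_of_le h₄ _

/-- If `g` and `ḡ` are inner products with `ḡ ≥ g`, then for every covariant 4-tensor `T`,
`|T|_ḡ ≤ |T|_g` (norms computed by contracting with the inverse metrics). -/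
theorem stmt_2 {n : ℕ} (G Gbar : Matrix (Fin n) (Fin n) ℝ)
    (hG : G.PosDef) (hGbar : Gbar.PosDef)
    (hle : ∀ x : Fin n → ℝ, x ⬝ᵥ G.mulVec x ≤ x ⬝ᵥ Gbar.mulVec x)
    (T : Fin n → Fin n → Fin n → Fin n → ℝ) :
    Real.sqrt (normSq4 Gbar⁻¹ T) ≤ Real.sqrt (normSq4 G⁻¹ T) := by
  have hGGbar : G ≤ Gbar := le_iff.mpr <| .of_dotProduct_mulVec_nonneg
    (hGbar.isHermitian.sub hG.isHermitian) fun x => by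
      simpa [sub_mulVec, dotProduct_sub] using hle x
  have hGbar_inv : 0 ≤ Gbar⁻¹ := nonneg_iff_posSemidef.mpr hGbar.inv.posSemidef
  exact Real.sqrt_le_sqrt (normSq4_le_of_le hGbar_inv (hG.inv_le_inv hGGbar) T)
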